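/- Let n ≥ 3 and let w : ZMod n → Bool × Bool encode a dominating set of the prism graph G_n. If w_i = C and w_{i+1} = C for some i ∈ ZMod n, then w_{i−1} = D and w_{i+2} = D. -/

import Mathlib

/-- The prism graph `C_n □ P_2` on vertex set `ZMod n × Fin 2`:
`(i,r)` is adjacent to `(i±1,r)` and to `(i,1-r)`. -/
def prismGraph (n : ℕ) : SimpleGraph (ZMod n × Fin 2) where
  Adj u v := u ≠ v ∧
    ((u.1 = v.1 ∧ u.2 ≠ v.2) ∨
     (u.2 = v.2 ∧ (u.1 = v.1 + 1 ∨ v.1 = u.1 + 1)))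
  symm := by
    refine ⟨?_⟩
    rintro ⟨i, r⟩ ⟨j, s⟩ ⟨hne, h⟩
    refine ⟨Ne.symm hne, ?_⟩
    rcases h with ⟨h1, h2⟩ | ⟨h1, h2⟩
    · exact Or.inl ⟨h1.symm, h2.symm⟩
    · exact Or.inr ⟨h1.symm, h2.symm⟩
  loopless := by
    refine ⟨?_⟩
    rintro ⟨i, r⟩ ⟨hne, -⟩
    exact hne rfl

/-- `S` is a dominating set of the prism graph: every vertex is in `S`
or adjacent to a vertex of `S`. -/
def IsDominatingSet (n : ℕ) (S : Set (ZMod n × Fin 2)) : Prop :=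
  ∀ v, v ∈ S ∨ ∃ u ∈ S, (prismGraph n).Adj u v

/-- The domination number `γ(G_n)`: minimum cardinality of a dominating set. -/
noncomputable def domNum (n : ℕ) : ℕ :=
  sInf {k | ∃ S : Finset (ZMod n × Fin 2), S.card = k ∧ IsDominatingSet n ↑S}

/-- The dominion `ζ(G_n)`: the number of dominating sets of cardinality `γ(G_n)`. -/
noncomputable def dominion (n : ℕ) : ℕ :=
  {S : Finset (ZMod n × Fin 2) | S.card = domNum n ∧ IsDominatingSet n ↑S}.ncard

/-- The set of vertices encoded by a word `w : ZMod n → Bool × Bool`;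
the first bit of `w i` records membership of the top vertex `(i,0)`,
the second bit that of the bottom vertex `(i,1)`. -/
def wordSet (n : ℕ) (w : ZMod n → Bool × Bool) : Set (ZMod n × Fin 2) :=
  {v | (if v.2 = 0 then (w v.1).1 else (w v.1).2) = true}

/-- A minimum dominating word: it encodes a dominating set of cardinality `γ(G_n)`. -/
def IsMinDomWord (n : ℕ) (w : ZMod n → Bool × Bool) : Prop :=
  IsDominatingSet n (wordSet n w) ∧ (wordSet n w).ncard = domNum n

def letC : Bool × Bool := (false, false)
def letA : Bool × Bool := (true, false)
def letB : Bool × Bool := (false, true)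
def letD : Bool × Bool := (true, true)

def rowBit (b : Bool × Bool) (r : Fin 2) : Bool := if r = 0 then b.1 else b.2

lemma mem_wordSet_iff {n : ℕ} {w : ZMod n → Bool × Bool} {v : ZMod n × Fin 2} :
    v ∈ wordSet n w ↔ rowBit (w v.1) v.2 = true := Iff.rfl

lemma eq_letD_of_forall_rowBit {b : Bool × Bool} (h : ∀ r, rowBit b r = true) : b = letD :=
  Prod.ext (by simpa [rowBit, letD] using h 0) (by simpa [rowBit, letD] using h 1)

lemma rowBit_sub_one_or_add_one_of_letC {n : ℕ} {w : ZMod n → Bool × Bool}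
    (hdom : IsDominatingSet n (wordSet n w)) {j : ZMod n} (hj : w j = letC) (r : Fin 2) :
    rowBit (w (j - 1)) r = true ∨ rowBit (w (j + 1)) r = true := by
  have hempty : ∀ s, rowBit (w j) s ≠ true := by
    intro s; fin_cases s <;> simp [rowBit, hj, letC]
  rcases hdom (j, r) with hmem | ⟨⟨a, s⟩, hmem, -, hadj⟩
  · exact absurd hmem (hempty r)
  rw [mem_wordSet_iff] at hmem
  simp only at hmem hadj
  rcases hadj with ⟨rfl, -⟩ | ⟨rfl, rfl | hja⟩
  · exact absurd hmem (hempty s)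
  · exact Or.inr hmem
  · left
    rwa [show a = j - 1 by rw [hja]; ring] at hmem

lemma eq_letD_of_letC_of_right_letC {n : ℕ} {w : ZMod n → Bool × Bool}
    (hdom : IsDominatingSet n (wordSet n w)) {j : ZMod n} (hj : w j = letC)
    (hright : w (j + 1) = letC) : w (j - 1) = letD := by
  refine eq_letD_of_forall_rowBit fun r => ?_
  refine (rowBit_sub_one_or_add_one_of_letC hdom hj r).resolve_right ?_
  fin_cases r <;> simp [rowBit, hright, letC]

lemma eq_letD_of_letC_of_left_letC {n : ℕ} {w : ZMod n → Bool × Bool}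
    (hdom : IsDominatingSet n (wordSet n w)) {j : ZMod n} (hj : w j = letC)
    (hleft : w (j - 1) = letC) : w (j + 1) = letD := by
  refine eq_letD_of_forall_rowBit fun r => ?_
  refine (rowBit_sub_one_or_add_one_of_letC hdom hj r).resolve_left ?_
  fin_cases r <;> simp [rowBit, hleft, letC]

theorem CC_forces_D_general (n : ℕ) (w : ZMod n → Bool × Bool)
    (hdom : IsDominatingSet n (wordSet n w)) (i : ZMod n)
    (h1 : w i = letC) (h2 : w (i + 1) = letC) :
    w (i - 1) = letD ∧ w (i + 2) = letD := by
  refine ⟨eq_letD_of_letC_of_right_letC hdom h1 h2, ?_⟩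
  have h := eq_letD_of_letC_of_left_letC hdom h2 (by rwa [add_sub_cancel_right])
  rwa [add_assoc, one_add_one_eq_two] at h

theorem CC_forces_D (n : ℕ) (hn : 3 ≤ n) (w : ZMod n → Bool × Bool)
    (hdom : IsDominatingSet n (wordSet n w)) (i : ZMod n)
    (h1 : w i = letC) (h2 : w (i + 1) = letC) :
    w (i - 1) = letD ∧ w (i + 2) = letD :=
  CC_forces_D_general n w hdom i h1 h2
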